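/- arXiv:2602.17681 — 2 statements merged into one kernel-verified Lean document; each statement's English description precedes it below -/
import Mathlib

section
/- Let P, P̃, Q be probability mass functions on a finite set Y with P(y) ≥ ε and P̃(y) ≥ ε for all y. Then |E_{Y∼Q}[−log(P̃(Y)/P(Y))]| ≤ KL(P ‖ P̃) + 2·log((1−ε)/ε)·TV(Q, P), where KL(P‖P̃) = Σ_y P(y)·log(P(y)/P̃(y)) and TV is total variation distance. -/
/-- `|E_{Y∼Q}[-log(P̃(Y)/P(Y))]| ≤ KL(P‖P̃) + 2 log((1-ε)/ε) TV(Q,P)` for pmfs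
`P, P̃` bounded below by `ε ∈ (0,1/2)`. -/
theorem nll_diff_kl_tv_bound {Y : Type*} [Fintype Y]
    (P Pt Q : Y → ℝ) (ε : ℝ) (hε : 0 < ε) (hε' : ε < 1/2)
    (hQ : ∀ y, 0 ≤ Q y)
    (hPsum : ∑ y, P y = 1) (hPtsum : ∑ y, Pt y = 1) (hQsum : ∑ y, Q y = 1)
    (hP : ∀ y, ε ≤ P y) (hPt : ∀ y, ε ≤ Pt y) :
    |∑ y, Q y * (-Real.log (Pt y / P y))| ≤
      (∑ y, P y * Real.log (P y / Pt y)) +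
        2 * Real.log ((1 - ε) / ε) * ((1/2) * ∑ y, |Q y - P y|) := by
  classical
  set L := Real.log ((1 - ε) / ε) with hLdef
  have hεlt : ε < 1 - ε := by linarith
  have hL : 0 ≤ L := Real.log_nonneg (by
    rw [le_div_iff₀ hε]; linarith)
  have hPpos : ∀ y, 0 < P y := fun y => lt_of_lt_of_le hε (hP y)
  have hPtpos : ∀ y, 0 < Pt y := fun y => lt_of_lt_of_le hε (hPt y)
  -- pointwise bound on |log (P y / Pt y)|
  have hub : ∀ y, |Real.log (P y / Pt y)| ≤ L := by
    intro y
    by_cases h : ∃ y', y' ≠ y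
    · obtain ⟨y', hy'⟩ := h
      have hsub : ∀ (f : Y → ℝ), (∀ i, ε ≤ f i) → (∑ i, f i = 1) → f y ≤ 1 - ε := by
        intro f hf hsum
        have hle : f y' + f y ≤ ∑ i, f i := by
          have := Finset.sum_le_sum_of_subset_of_nonneg
            (Finset.subset_univ ({y', y} : Finset Y))
            (fun i _ _ => le_trans hε.le (hf i))
          rwa [Finset.sum_pair hy'] at this
        have := hf y'
        linarith [hsum ▸ hle]
      have h1 := hsub P hP hPsum
      have h2 := hsub Pt hPt hPtsum
      rw [abs_le, hLdef]
      constructor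
      · rw [Real.log_div (ne_of_gt (hPpos y)) (ne_of_gt (hPtpos y)),
            Real.log_div (by linarith) (ne_of_gt hε)]
        have := Real.log_le_log (hPtpos y) h2
        have := Real.log_le_log hε (hP y)
        linarith
      · rw [Real.log_div (ne_of_gt (hPpos y)) (ne_of_gt (hPtpos y)),
            Real.log_div (by linarith) (ne_of_gt hε)]
        have := Real.log_le_log (hPpos y) h1
        have := Real.log_le_log hε (hPt y)
        linarith
    · push_neg at h
      have huniv : (Finset.univ : Finset Y) = {y} := by
        ext x; simp [h x]
      have hP1 : P y = 1 := by rw [← hPsum, huniv, Finset.sum_singleton]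
      have hPt1 : Pt y = 1 := by rw [← hPtsum, huniv, Finset.sum_singleton]
      have : (1:ℝ)/1 = 1 := by norm_num
      rw [hP1, hPt1, this, Real.log_one, abs_zero]
      exact hL
  -- KL nonneg
  have hKL : 0 ≤ ∑ y, P y * Real.log (P y / Pt y) := by
    have hpt : ∀ y, P y - Pt y ≤ P y * Real.log (P y / Pt y) := by
      intro y
      have h1 : Real.log (Pt y / P y) ≤ Pt y / P y - 1 :=
        Real.log_le_sub_one_of_pos (div_pos (hPtpos y) (hPpos y))
      have h2 : Real.log (P y / Pt y) = -Real.log (Pt y / P y) := by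
        rw [← Real.log_inv, inv_div]
      rw [h2]
      have h3 : 1 - Pt y / P y ≤ -Real.log (Pt y / P y) := by linarith
      have h4 := mul_le_mul_of_nonneg_left h3 (hPpos y).le
      have h5 : P y * (1 - Pt y / P y) = P y - Pt y := by
        field_simp [(hPpos y).ne']
      linarith
    calc (0:ℝ) = ∑ y, (P y - Pt y) := by
          rw [Finset.sum_sub_distrib, hPsum, hPtsum]; ring
      _ ≤ _ := Finset.sum_le_sum (fun y _ => hpt y)
  -- rewrite the sum
  have hsplit : ∑ y, Q y * (-Real.log (Pt y / P y)) =
      (∑ y, P y * Real.log (P y / Pt y)) + ∑ y, (Q y - P y) * Real.log (P y / Pt y) := by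
    rw [← Finset.sum_add_distrib]
    apply Finset.sum_congr rfl
    intro y _
    have h2 : Real.log (P y / Pt y) = -Real.log (Pt y / P y) := by
      rw [← Real.log_inv, inv_div]
    rw [h2]; ring
  rw [hsplit]
  have habs2 : |∑ y, (Q y - P y) * Real.log (P y / Pt y)| ≤ L * ∑ y, |Q y - P y| := by
    calc |∑ y, (Q y - P y) * Real.log (P y / Pt y)|
        ≤ ∑ y, |(Q y - P y) * Real.log (P y / Pt y)| := Finset.abs_sum_le_sum_abs _ _
      _ ≤ ∑ y, |Q y - P y| * L := by
          apply Finset.sum_le_sum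
          intro y _
          rw [abs_mul]
          exact mul_le_mul_of_nonneg_left (hub y) (abs_nonneg _)
      _ = L * ∑ y, |Q y - P y| := by rw [← Finset.sum_mul]; ring
  calc |(∑ y, P y * Real.log (P y / Pt y)) + ∑ y, (Q y - P y) * Real.log (P y / Pt y)|
      ≤ |∑ y, P y * Real.log (P y / Pt y)| + |∑ y, (Q y - P y) * Real.log (P y / Pt y)| :=
        abs_add_le _ _
    _ ≤ (∑ y, P y * Real.log (P y / Pt y)) + L * ∑ y, |Q y - P y| := by
        rw [abs_of_nonneg hKL]; linarith
    _ = (∑ y, P y * Real.log (P y / Pt y)) + 2 * L * ((1/2) * ∑ y, |Q y - P y|) := by ring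
end

section
/- Let L(P) = E_{X}[E_{Y∼Q(·|X)}[−log P(Y|X)]] denote the expected negative log-likelihood under context distribution over X and response distribution Q(·|X). If for every context X the conditional distributions P_θ(·|X) and P̃_Φ(·|X) are lower-bounded by ε, then |L(P̃_Φ) − L(P_θ)| ≤ E_X[KL(P_θ(·|X) ‖ P̃_Φ(·|X))] + 2·log((1−ε)/ε)·E_X[TV(Q(·|X), P_θ(·|X))]. -/
/-!
Per context, write `c = log (P_θ / P̃_Φ)`. The loss gap is the `Q`-mean of `c`, which equals
its `P_θ`-mean (the KL divergence, nonnegative by Gibbs) plus `∑ (Q - P_θ) c`. Since all masses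
lie in `[ε, 1 - ε]`, `|c| ≤ log ((1 - ε) / ε)`, so the correction is at most that bound times
`∑ |Q - P_θ| = 2 TV`. Averaging over contexts with nonnegative weights gives the claim.
-/

open Finset Real

theorem abs_log_div_le_log_div_of_mem_Icc {a b m M : ℝ} (hm : 0 < m)
    (ha : a ∈ Set.Icc m M) (hb : b ∈ Set.Icc m M) :
    |log (a / b)| ≤ log (M / m) := by
  have ha₀ : 0 < a := hm.trans_le ha.1
  have hb₀ : 0 < b := hm.trans_le hb.1
  rw [log_div ha₀.ne' hb₀.ne', log_div (hm.trans_le (ha.1.trans ha.2)).ne' hm.ne', abs_le]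
  have := log_le_log ha₀ ha.2
  have := log_le_log hb₀ hb.2
  have := log_le_log hm ha.1
  have := log_le_log hm hb.1
  constructor <;> linarith

theorem le_one_sub_of_sum_eq_one {Y : Type*} [Fintype Y] {p : Y → ℝ} {ε : ℝ} (hε : 0 ≤ ε)
    (hp : ∀ y, ε ≤ p y) (hsum : ∑ y, p y = 1) {y y' : Y} (hne : y ≠ y') :
    p y ≤ 1 - ε := by
  classical
  have hpair : p y + p y' ≤ ∑ z, p z := by
    rw [← sum_pair hne]
    exact sum_le_sum_of_subset_of_nonneg (subset_univ _) fun z _ _ ↦ hε.trans (hp z)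
  linarith [hp y']

/-- Unless `Y` is a point, every mass lies in `[ε, 1 - ε]`. -/
theorem abs_log_div_le_of_sum_eq_one {Y : Type*} [Fintype Y] {p q : Y → ℝ} {ε : ℝ}
    (hε : 0 < ε) (hε' : ε < 1 / 2) (hp : ∀ y, ε ≤ p y) (hq : ∀ y, ε ≤ q y)
    (hpsum : ∑ y, p y = 1) (hqsum : ∑ y, q y = 1) (y : Y) :
    |log (p y / q y)| ≤ log ((1 - ε) / ε) := by
  rcases subsingleton_or_nontrivial Y with hY | hY
  · have hY1 : ∀ r : Y → ℝ, ∑ z, r z = 1 → r y = 1 := fun r hr ↦ by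
      rwa [Fintype.sum_subsingleton _ y] at hr
    rw [hY1 p hpsum, hY1 q hqsum, div_one, log_one, abs_zero]
    exact log_nonneg (by rw [le_div_iff₀ hε]; linarith)
  · obtain ⟨y', hne⟩ := exists_ne y
    exact abs_log_div_le_log_div_of_mem_Icc hε
      ⟨hp y, le_one_sub_of_sum_eq_one hε.le hp hpsum hne.symm⟩
      ⟨hq y, le_one_sub_of_sum_eq_one hε.le hq hqsum hne.symm⟩

theorem sum_mul_log_div_nonneg {ι : Type*} {s : Finset ι} {p q : ι → ℝ}
    (hp : ∀ i ∈ s, 0 < p i) (hq : ∀ i ∈ s, 0 < q i) (hsum : ∑ i ∈ s, q i ≤ ∑ i ∈ s, p i) :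
    0 ≤ ∑ i ∈ s, p i * log (p i / q i) := by
  have hterm : ∀ i ∈ s, p i - q i ≤ p i * log (p i / q i) := fun i hi ↦ by
    have h := one_sub_inv_le_log_of_pos (div_pos (hp i hi) (hq i hi))
    rw [inv_div] at h
    have h' := mul_le_mul_of_nonneg_left h (hp i hi).le
    rwa [mul_sub, mul_one, mul_div_cancel₀ _ (hp i hi).ne'] at h'
  calc 0 ≤ ∑ i ∈ s, (p i - q i) := by rw [sum_sub_distrib]; linarith
    _ ≤ _ := sum_le_sum hterm

theorem abs_sum_mul_le_sum_mul_add_mul_sum_abs_sub {ι : Type*} {s : Finset ι}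
    {p q c : ι → ℝ} {M : ℝ} (hc : ∀ i ∈ s, |c i| ≤ M) (hpc : 0 ≤ ∑ i ∈ s, p i * c i) :
    |∑ i ∈ s, q i * c i| ≤ ∑ i ∈ s, p i * c i + M * ∑ i ∈ s, |q i - p i| := by
  have hsplit : ∑ i ∈ s, q i * c i = ∑ i ∈ s, p i * c i + ∑ i ∈ s, (q i - p i) * c i := by
    rw [← sum_add_distrib]; exact sum_congr rfl fun i _ ↦ by ring
  have hrest : |∑ i ∈ s, (q i - p i) * c i| ≤ M * ∑ i ∈ s, |q i - p i| := by
    rw [mul_sum]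
    refine (abs_sum_le_sum_abs _ _).trans (sum_le_sum fun i hi ↦ ?_)
    rw [abs_mul, mul_comm M]
    exact mul_le_mul_of_nonneg_left (hc i hi) (abs_nonneg _)
  rw [hsplit]
  calc _ ≤ |∑ i ∈ s, p i * c i| + |∑ i ∈ s, (q i - p i) * c i| := abs_add_le _ _
    _ ≤ _ := by rw [abs_of_nonneg hpc]; linarith

theorem abs_sum_mul_le_sum_mul_of_abs_le {ι : Type*} {s : Finset ι} {w f g : ι → ℝ}
    (hw : ∀ i ∈ s, 0 ≤ w i) (hfg : ∀ i ∈ s, |f i| ≤ g i) :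
    |∑ i ∈ s, w i * f i| ≤ ∑ i ∈ s, w i * g i := by
  refine (abs_sum_le_sum_abs _ _).trans (sum_le_sum fun i hi ↦ ?_)
  rw [abs_mul, abs_of_nonneg (hw i hi)]
  exact mul_le_mul_of_nonneg_left (hfg i hi) (hw i hi)

theorem nll_gap_bound_general {X Y : Type*} [Fintype X] [Fintype Y]
    (w : X → ℝ) (hw : ∀ x, 0 ≤ w x)
    (Qc Pθ Pt : X → Y → ℝ) (ε : ℝ) (hε : 0 < ε) (hε' : ε < 1/2)
    (hPθsum : ∀ x, ∑ y, Pθ x y = 1) (hPtsum : ∀ x, ∑ y, Pt x y = 1)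
    (hPθ : ∀ x y, ε ≤ Pθ x y) (hPt : ∀ x y, ε ≤ Pt x y) :
    |(∑ x, w x * ∑ y, Qc x y * (-Real.log (Pt x y))) -
      (∑ x, w x * ∑ y, Qc x y * (-Real.log (Pθ x y)))| ≤
      (∑ x, w x * ∑ y, Pθ x y * Real.log (Pθ x y / Pt x y)) +
        2 * Real.log ((1 - ε) / ε) *
          (∑ x, w x * ((1/2) * ∑ y, |Qc x y - Pθ x y|)) := by
  have hPθpos x y : 0 < Pθ x y := hε.trans_le (hPθ x y)
  have hPtpos x y : 0 < Pt x y := hε.trans_le (hPt x y)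
  have hgap : (∑ x, w x * ∑ y, Qc x y * (-log (Pt x y))) -
      (∑ x, w x * ∑ y, Qc x y * (-log (Pθ x y))) =
      ∑ x, w x * ∑ y, Qc x y * log (Pθ x y / Pt x y) := by
    simp only [← sum_sub_distrib, ← mul_sub, log_div (hPθpos _ _).ne' (hPtpos _ _).ne']
    exact sum_congr rfl fun x _ ↦ congrArg _ (sum_congr rfl fun y _ ↦ by ring)
  have hcontext x : |∑ y, Qc x y * log (Pθ x y / Pt x y)| ≤
      ∑ y, Pθ x y * log (Pθ x y / Pt x y) + log ((1 - ε) / ε) * ∑ y, |Qc x y - Pθ x y| :=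
    abs_sum_mul_le_sum_mul_add_mul_sum_abs_sub
      (fun y _ ↦ abs_log_div_le_of_sum_eq_one hε hε' (hPθ x) (hPt x) (hPθsum x) (hPtsum x) y)
      (sum_mul_log_div_nonneg (fun y _ ↦ hPθpos x y) (fun y _ ↦ hPtpos x y)
        (by rw [hPθsum, hPtsum]))
  rw [hgap]
  refine (abs_sum_mul_le_sum_mul_of_abs_le (fun x _ ↦ hw x) fun x _ ↦ hcontext x).trans_eq ?_
  simp only [mul_add, sum_add_distrib, mul_sum]
  congr 1
  exact sum_congr rfl fun x _ ↦ sum_congr rfl fun y _ ↦ by ring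

/-- Difference of expected negative log-likelihoods between a quantized model
`P̃_Φ` and a floating point model `P_θ`, both lower bounded by `ε`, is bounded
by the expected KL divergence plus a total-variation term:
`|L(P̃_Φ) - L(P_θ)| ≤ E_X[KL(P_θ(·|X) ‖ P̃_Φ(·|X))]
  + 2 log((1-ε)/ε) E_X[TV(Q(·|X), P_θ(·|X))]`. -/
theorem nll_gap_bound {X Y : Type*} [Fintype X] [Fintype Y]
    (w : X → ℝ) (hw : ∀ x, 0 ≤ w x) (hwsum : ∑ x, w x = 1)
    (Qc Pθ Pt : X → Y → ℝ) (ε : ℝ) (hε : 0 < ε) (hε' : ε < 1/2)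
    (hQc : ∀ x y, 0 ≤ Qc x y)
    (hQcsum : ∀ x, ∑ y, Qc x y = 1)
    (hPθsum : ∀ x, ∑ y, Pθ x y = 1) (hPtsum : ∀ x, ∑ y, Pt x y = 1)
    (hPθ : ∀ x y, ε ≤ Pθ x y) (hPt : ∀ x y, ε ≤ Pt x y) :
    |(∑ x, w x * ∑ y, Qc x y * (-Real.log (Pt x y))) -
      (∑ x, w x * ∑ y, Qc x y * (-Real.log (Pθ x y)))| ≤
      (∑ x, w x * ∑ y, Pθ x y * Real.log (Pθ x y / Pt x y)) +
        2 * Real.log ((1 - ε) / ε) *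
          (∑ x, w x * ((1/2) * ∑ y, |Qc x y - Pθ x y|)) :=
  nll_gap_bound_general w hw Qc Pθ Pt ε hε hε' hPθsum hPtsum hPθ hPt
end
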